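/- arXiv:2302.03363 — 3 statements merged into one kernel-verified Lean document; each statement's English description precedes it below -/
import Mathlib

section
/- Let α, β, γ be real numbers with α > -1/2, γ > -1 and α + β + γ > -3/2. For t ≥ 1 define F(t) = ∫₀¹ s^{2α} (∫ₛ¹ u^β (u−s)^γ du) (∫ₜ^{t+1} v^β (v−s)^γ dv) ds. Then lim_{t→+∞} t^{−(β+γ)} F(t) = B(2α+1, γ+1) / (2α+β+γ+2), where B(a,b) = Γ(a)Γ(b)/Γ(a+b) is the Beta function. -/
/-!
Write `F t = ∫₀¹ φ(s) H_t(s) ds` with `φ(s) = s^{2α} ∫ₛ¹ u^β (u-s)^γ du` and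
`H_t(s) = ∫ₜ^{t+1} v^β (v-s)^γ dv`. For `v ∈ [t, t+1]` and `s ∈ [0, 1]` both `v/t` and `(v-s)/t`
lie within `1/t` of `1`, so `t^{-(β+γ)} H_t(s) → 1` uniformly in `s`, and since `φ ≥ 0` is
integrable, `t^{-(β+γ)} F t → ∫₀¹ φ`. Swapping the order of integration in `∫₀¹ φ`, the inner
integral is the Beta integral `∫₀ᵘ s^{2α} (u-s)^γ ds = u^{2α+γ+1} B(2α+1, γ+1)`, and integrating
`u^{2α+β+γ+1}` over `[0, 1]` gives the factor `1 / (2α+β+γ+2)`.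
-/

open MeasureTheory Filter Set
open scoped Topology

theorem integral_rpow_mul_sub_rpow {a b u : ℝ} (ha : -1 < a) (hb : -1 < b) (hu : 0 < u) :
    ∫ s in (0 : ℝ)..u, s ^ a * (u - s) ^ b
      = u ^ (a + b + 1) * (Real.Gamma (a + 1) * Real.Gamma (b + 1) / Real.Gamma (a + b + 2)) := by
  have hbeta : Complex.betaIntegral (a + 1 : ℝ) (b + 1 : ℝ)
      = (Real.Gamma (a + 1) * Real.Gamma (b + 1) / Real.Gamma (a + b + 2) : ℝ) := by
    have h := Complex.Gamma_mul_Gamma_eq_betaIntegral (s := (a + 1 : ℝ)) (t := (b + 1 : ℝ))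
      (by simp; linarith) (by simp; linarith)
    rw [← Complex.ofReal_add, Complex.Gamma_ofReal, Complex.Gamma_ofReal, Complex.Gamma_ofReal,
      show a + 1 + (b + 1) = a + b + 2 by ring] at h
    have hG : (Real.Gamma (a + b + 2) : ℂ) ≠ 0 :=
      Complex.ofReal_ne_zero.2 (Real.Gamma_pos_of_pos (by linarith)).ne'
    rw [Complex.ofReal_div, Complex.ofReal_mul, h]
    field_simp
  have h := Complex.betaIntegral_scaled (a + 1 : ℝ) (b + 1 : ℝ) hu
  rw [hbeta, show ((a + 1 : ℝ) : ℂ) + (b + 1 : ℝ) - 1 = (a + b + 1 : ℝ) by push_cast; ring,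
    ← Complex.ofReal_cpow hu.le, ← Complex.ofReal_mul] at h
  refine Complex.ofReal_injective (Eq.trans ?_ h)
  rw [← intervalIntegral.integral_ofReal]
  refine intervalIntegral.integral_congr fun s hs => ?_
  rw [uIcc_of_le hu.le] at hs
  simp only [Complex.ofReal_mul, Complex.ofReal_cpow hs.1, Complex.ofReal_cpow (sub_nonneg.2 hs.2),
    Complex.ofReal_sub, Complex.ofReal_add, Complex.ofReal_one, add_sub_cancel_right]

noncomputable def volterraKernel (a β γ : ℝ) (p : ℝ × ℝ) : ℝ :=
  if p.1 < p.2 then p.1 ^ a * (p.2 ^ β * (p.2 - p.1) ^ γ) else 0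

section volterraKernel

variable {a β γ : ℝ}

theorem measurable_volterraKernel : Measurable (volterraKernel a β γ) :=
  Measurable.ite (measurableSet_lt measurable_fst measurable_snd)
    ((measurable_fst.pow_const a).mul
      ((measurable_snd.pow_const β).mul ((measurable_snd.sub measurable_fst).pow_const γ)))
    measurable_const

theorem volterraKernel_nonneg {p : ℝ × ℝ} (hp : 0 ≤ p.1) : 0 ≤ volterraKernel a β γ p := by
  unfold volterraKernel
  split_ifs with h
  · have := hp.trans h.le
    have := sub_nonneg.2 h.le
    positivity
  · exact le_rfl

theorem integral_volterraKernel_right {s : ℝ} (hs : s ∈ Ioc (0 : ℝ) 1) :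
    ∫ u in Ioc (0 : ℝ) 1, volterraKernel a β γ (s, u)
      = s ^ a * ∫ u in s..1, u ^ β * (u - s) ^ γ := by
  have hK : (fun u => volterraKernel a β γ (s, u))
      = (Ioi s).indicator fun u => s ^ a * (u ^ β * (u - s) ^ γ) := by
    ext u; simp [volterraKernel, indicator_apply]
  rw [hK, integral_indicator measurableSet_Ioi, Measure.restrict_restrict measurableSet_Ioi,
    inter_comm, Ioc_inter_Ioi, max_eq_right hs.1.le, integral_const_mul,
    intervalIntegral.integral_of_le hs.2]

theorem rpow_mul_integral_rpow_mul_sub_rpow_nonneg {s : ℝ} (hs : s ∈ Ioc (0 : ℝ) 1) :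
    0 ≤ s ^ a * ∫ u in s..1, u ^ β * (u - s) ^ γ :=
  integral_volterraKernel_right hs ▸
    setIntegral_nonneg measurableSet_Ioc fun _ _ => volterraKernel_nonneg hs.1.le

theorem integral_volterraKernel_left (ha : -1 < a) (hγ : -1 < γ) {u : ℝ}
    (hu : u ∈ Ioc (0 : ℝ) 1) :
    ∫ s in Ioc (0 : ℝ) 1, volterraKernel a β γ (s, u)
      = Real.Gamma (a + 1) * Real.Gamma (γ + 1) / Real.Gamma (a + γ + 2)
        * u ^ (a + β + γ + 1) := by
  have hK : (fun s => volterraKernel a β γ (s, u))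
      = (Iio u).indicator fun s => u ^ β * (s ^ a * (u - s) ^ γ) := by
    ext s; simp only [volterraKernel, indicator_apply, mem_Iio]; split_ifs <;> ring
  rw [hK, integral_indicator measurableSet_Iio, Measure.restrict_restrict measurableSet_Iio,
    show Iio u ∩ Ioc 0 1 = Ioo 0 u by
      ext; simp only [mem_inter_iff, mem_Iio, mem_Ioc, mem_Ioo]; grind,
    ← integral_Ioc_eq_integral_Ioo, integral_const_mul,
    ← intervalIntegral.integral_of_le hu.1.le, integral_rpow_mul_sub_rpow ha hγ hu.1,
    show a + β + γ + 1 = β + (a + γ + 1) by ring, Real.rpow_add hu.1 β]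
  ring

theorem integrable_volterraKernel (ha : -1 < a) (hγ : -1 < γ) (habγ : -2 < a + β + γ) :
    Integrable (volterraKernel a β γ)
      ((volume.restrict (Ioc (0 : ℝ) 1)).prod (volume.restrict (Ioc (0 : ℝ) 1))) := by
  have hB : 0 < Real.Gamma (a + 1) * Real.Gamma (γ + 1) / Real.Gamma (a + γ + 2) := by
    have := Real.Gamma_pos_of_pos (show 0 < a + 1 by linarith)
    have := Real.Gamma_pos_of_pos (show 0 < γ + 1 by linarith)
    have := Real.Gamma_pos_of_pos (show 0 < a + γ + 2 by linarith)
    positivity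
  have hmem : ∀ᵐ x ∂volume.restrict (Ioc (0 : ℝ) 1), x ∈ Ioc (0 : ℝ) 1 :=
    ae_restrict_mem measurableSet_Ioc
  rw [integrable_prod_iff' measurable_volterraKernel.aestronglyMeasurable]
  constructor
  · filter_upwards [hmem] with u hu
    -- a non-integrable function would have the junk integral `0`, not the Beta value
    refine Integrable.of_integral_ne_zero ?_
    rw [integral_volterraKernel_left ha hγ hu]
    exact (mul_pos hB (Real.rpow_pos_of_pos hu.1 _)).ne'
  · have hpow : IntegrableOn (fun u : ℝ => Real.Gamma (a + 1) * Real.Gamma (γ + 1)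
        / Real.Gamma (a + γ + 2) * u ^ (a + β + γ + 1)) (Ioc 0 1) :=
      (intervalIntegrable_iff_integrableOn_Ioc_of_le zero_le_one).1
        ((intervalIntegral.intervalIntegrable_rpow' (by linarith)).const_mul _)
    refine hpow.congr_fun_ae ?_
    filter_upwards [hmem] with u hu
    rw [← integral_volterraKernel_left ha hγ hu]
    refine setIntegral_congr_fun measurableSet_Ioc fun s hs => ?_
    exact (Real.norm_of_nonneg (volterraKernel_nonneg hs.1.le)).symm

theorem integrableOn_rpow_mul_integral_rpow_mul_sub_rpow (ha : -1 < a) (hγ : -1 < γ)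
    (habγ : -2 < a + β + γ) :
    IntegrableOn (fun s => s ^ a * ∫ u in s..1, u ^ β * (u - s) ^ γ) (Ioc 0 1) := by
  refine (integrable_volterraKernel ha hγ habγ).integral_prod_left.congr ?_
  filter_upwards [ae_restrict_mem measurableSet_Ioc] with s hs
  exact integral_volterraKernel_right hs

theorem integral_rpow_mul_integral_rpow_mul_sub_rpow (ha : -1 < a) (hγ : -1 < γ)
    (habγ : -2 < a + β + γ) :
    ∫ s in (0 : ℝ)..1, s ^ a * ∫ u in s..1, u ^ β * (u - s) ^ γ
      = Real.Gamma (a + 1) * Real.Gamma (γ + 1) / Real.Gamma (a + γ + 2) / (a + β + γ + 2) := by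
  calc ∫ s in (0 : ℝ)..1, s ^ a * ∫ u in s..1, u ^ β * (u - s) ^ γ
      = ∫ s in Ioc (0 : ℝ) 1, ∫ u in Ioc (0 : ℝ) 1, volterraKernel a β γ (s, u) := by
        rw [intervalIntegral.integral_of_le zero_le_one]
        exact setIntegral_congr_fun measurableSet_Ioc fun s hs =>
          (integral_volterraKernel_right hs).symm
    _ = ∫ u in Ioc (0 : ℝ) 1, ∫ s in Ioc (0 : ℝ) 1, volterraKernel a β γ (s, u) :=
        integral_integral_swap (integrable_volterraKernel ha hγ habγ)
    _ = ∫ u in Ioc (0 : ℝ) 1, Real.Gamma (a + 1) * Real.Gamma (γ + 1) / Real.Gamma (a + γ + 2)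
          * u ^ (a + β + γ + 1) :=
        setIntegral_congr_fun measurableSet_Ioc fun u hu => integral_volterraKernel_left ha hγ hu
    _ = _ := by
        rw [integral_const_mul, ← intervalIntegral.integral_of_le zero_le_one,
          integral_rpow (Or.inl (by linarith)), Real.one_rpow, Real.zero_rpow (by linarith),
          show a + β + γ + 1 + 1 = a + β + γ + 2 by ring]
        ring

end volterraKernel

theorem tendsto_integral_mul_of_mem_Icc {α ι : Type*} [MeasurableSpace α] {μ : Measure α}
    {l : Filter ι} {φ : α → ℝ} {K : ι → α → ℝ} {L U : ι → ℝ} {c : ℝ}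
    (hφ : Integrable φ μ) (hφ0 : 0 ≤ᵐ[μ] φ) (hK : ∀ᶠ i in l, AEStronglyMeasurable (K i) μ)
    (hKLU : ∀ᶠ i in l, ∀ᵐ x ∂μ, K i x ∈ Icc (L i) (U i))
    (hL : Tendsto L l (𝓝 c)) (hU : Tendsto U l (𝓝 c)) :
    Tendsto (fun i => ∫ x, φ x * K i x ∂μ) l (𝓝 (c * ∫ x, φ x ∂μ)) := by
  have hbounds : ∀ᶠ i in l, L i * ∫ x, φ x ∂μ ≤ ∫ x, φ x * K i x ∂μ ∧
      ∫ x, φ x * K i x ∂μ ≤ U i * ∫ x, φ x ∂μ := by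
    filter_upwards [hK, hKLU] with i hKi hi
    have hint : Integrable (fun x => φ x * K i x) μ :=
      hφ.mul_bdd hKi (hi.mono fun x hx => abs_le_max_abs_abs hx.1 hx.2)
    rw [← integral_const_mul, ← integral_const_mul]
    constructor
    · refine integral_mono_ae (hφ.const_mul _) hint ?_
      filter_upwards [hφ0, hi] with x hx0 hx
      exact (mul_comm _ _).trans_le (mul_le_mul_of_nonneg_left hx.1 hx0)
    · refine integral_mono_ae hint (hφ.const_mul _) ?_
      filter_upwards [hφ0, hi] with x hx0 hx
      exact (mul_le_mul_of_nonneg_left hx.2 hx0).trans_eq (mul_comm _ _)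
  exact tendsto_of_tendsto_of_tendsto_of_le_of_le' (hL.mul_const _) (hU.mul_const _)
    (hbounds.mono fun _ h => h.1) (hbounds.mono fun _ h => h.2)

theorem rpow_mem_Icc_min_max {a b x : ℝ} (ha : 0 < a) (hx : x ∈ Icc a b) (e : ℝ) :
    x ^ e ∈ Icc (min (a ^ e) (b ^ e)) (max (a ^ e) (b ^ e)) := by
  have hx0 : 0 < x := ha.trans_le hx.1
  rcases le_or_gt 0 e with he | he
  · exact ⟨min_le_of_left_le (Real.rpow_le_rpow ha.le hx.1 he),
      le_max_of_le_right (Real.rpow_le_rpow hx0.le hx.2 he)⟩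
  · exact ⟨min_le_of_right_le (Real.rpow_le_rpow_of_nonpos hx0 hx.2 he.le),
      le_max_of_le_left (Real.rpow_le_rpow_of_nonpos ha hx.1 he.le)⟩

theorem rpow_mul_rpow_mem_Icc {lo hi x y β γ : ℝ} (hlo : 0 < lo) (hx : x ∈ Icc lo hi)
    (hy : y ∈ Icc lo hi) :
    x ^ β * y ^ γ ∈ Icc (min (lo ^ β) (hi ^ β) * min (lo ^ γ) (hi ^ γ))
      (max (lo ^ β) (hi ^ β) * max (lo ^ γ) (hi ^ γ)) := by
  have hhi : 0 < hi := hlo.trans_le (hx.1.trans hx.2)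
  have hxβ := rpow_mem_Icc_min_max hlo hx β
  have hyγ := rpow_mem_Icc_min_max hlo hy γ
  exact ⟨mul_le_mul hxβ.1 hyγ.1 (le_min (by positivity) (by positivity))
      (Real.rpow_nonneg (hlo.le.trans hx.1) _),
    mul_le_mul hxβ.2 hyγ.2 (Real.rpow_nonneg (hlo.le.trans hy.1) _)
      (le_max_of_le_left (by positivity))⟩

theorem tendsto_min_rpow_one_sub_one_add (e : ℝ) :
    Tendsto (fun δ : ℝ => min ((1 - δ) ^ e) ((1 + δ) ^ e)) (𝓝 0) (𝓝 1) := by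
  have h : ContinuousAt (fun δ : ℝ => min ((1 - δ) ^ e) ((1 + δ) ^ e)) 0 := by
    fun_prop (disch := norm_num)
  simpa using h.tendsto

theorem tendsto_max_rpow_one_sub_one_add (e : ℝ) :
    Tendsto (fun δ : ℝ => max ((1 - δ) ^ e) ((1 + δ) ^ e)) (𝓝 0) (𝓝 1) := by
  have h : ContinuousAt (fun δ : ℝ => max ((1 - δ) ^ e) ((1 + δ) ^ e)) 0 := by
    fun_prop (disch := norm_num)
  simpa using h.tendsto

theorem intervalIntegral.integral_mem_Icc_of_forall_mem_Icc {f : ℝ → ℝ} {a b m M : ℝ}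
    (hab : a ≤ b) (hf : IntervalIntegrable f volume a b) (h : ∀ x ∈ Icc a b, f x ∈ Icc m M) :
    ∫ x in a..b, f x ∈ Icc (m * (b - a)) (M * (b - a)) := by
  constructor
  · simpa [mul_comm] using intervalIntegral.integral_mono_on hab intervalIntegrable_const hf
      fun x hx => (h x hx).1
  · simpa [mul_comm] using intervalIntegral.integral_mono_on hab hf intervalIntegrable_const
      fun x hx => (h x hx).2

theorem stronglyMeasurable_integral_rpow_mul_sub_rpow (β γ : ℝ) {a b : ℝ} (hab : a ≤ b) :
    StronglyMeasurable fun s : ℝ => ∫ v in a..b, v ^ β * (v - s) ^ γ := by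
  simp only [intervalIntegral.integral_of_le hab]
  exact ((measurable_snd.pow_const β).mul
    ((measurable_snd.sub measurable_fst).pow_const γ)).stronglyMeasurable.integral_prod_right'

theorem rpow_neg_mul_integral_rpow_mul_sub_rpow_mem_Icc {β γ t s : ℝ} (ht : 1 < t)
    (hs : s ∈ Icc (0 : ℝ) 1) :
    t ^ (-(β + γ)) * ∫ v in t..t + 1, v ^ β * (v - s) ^ γ ∈
      Icc (min ((1 - t⁻¹) ^ β) ((1 + t⁻¹) ^ β) * min ((1 - t⁻¹) ^ γ) ((1 + t⁻¹) ^ γ))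
        (max ((1 - t⁻¹) ^ β) ((1 + t⁻¹) ^ β) * max ((1 - t⁻¹) ^ γ) ((1 + t⁻¹) ^ γ)) := by
  have ht0 : 0 < t := by linarith
  have hlo : 0 < 1 - t⁻¹ := sub_pos.2 (inv_lt_one_of_one_lt₀ ht)
  have hwindow : ∀ v ∈ Icc t (t + 1),
      v / t ∈ Icc (1 - t⁻¹) (1 + t⁻¹) ∧ (v - s) / t ∈ Icc (1 - t⁻¹) (1 + t⁻¹) := by
    intro v hv
    simp only [mem_Icc, le_div_iff₀ ht0, div_le_iff₀ ht0, sub_mul, add_mul, one_mul,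
      inv_mul_cancel₀ ht0.ne']
    refine ⟨⟨?_, ?_⟩, ?_, ?_⟩ <;> linarith [hv.1, hv.2, hs.1, hs.2]
  have hscale : ∀ v ∈ Icc t (t + 1),
      t ^ (-(β + γ)) * (v ^ β * (v - s) ^ γ) = (v / t) ^ β * ((v - s) / t) ^ γ := by
    intro v hv
    rw [Real.div_rpow (by linarith [hv.1]) ht0.le,
      Real.div_rpow (by linarith [hv.1, hs.2]) ht0.le, Real.rpow_neg ht0.le, Real.rpow_add ht0]
    field_simp
  have hcont : ContinuousOn (fun v => (v / t) ^ β * ((v - s) / t) ^ γ) (Icc t (t + 1)) :=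
    (ContinuousOn.rpow_const (by fun_prop) fun v hv =>
        Or.inl (hlo.trans_le (hwindow v hv).1.1).ne').mul
      (ContinuousOn.rpow_const (by fun_prop) fun v hv =>
        Or.inl (hlo.trans_le (hwindow v hv).2.1).ne')
  rw [← intervalIntegral.integral_const_mul,
    intervalIntegral.integral_congr fun v hv => hscale v (by rwa [uIcc_of_le (by linarith)] at hv)]
  simpa using intervalIntegral.integral_mem_Icc_of_forall_mem_Icc (by linarith)
    (hcont.intervalIntegrable_of_Icc (by linarith)) fun v hv =>
      rpow_mul_rpow_mem_Icc hlo (hwindow v hv).1 (hwindow v hv).2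

/-- Theorem 3.3 (first part): asymptotics of the covariance
`E[X₁ (X_{t+1} - X_t)]` for the Gaussian Volterra process. -/
theorem stmt_1 (α β γ : ℝ) (hα : -(1/2 : ℝ) < α) (hγ : -1 < γ)
    (hαβγ : -(3/2 : ℝ) < α + β + γ)
    (F : ℝ → ℝ)
    (hF : ∀ t : ℝ, F t = ∫ s in (0:ℝ)..1, s ^ (2*α) *
      (∫ u in s..1, u ^ β * (u - s) ^ γ) *
      (∫ v in t..(t+1), v ^ β * (v - s) ^ γ)) :
    Tendsto (fun t : ℝ => t ^ (-(β + γ)) * F t) atTop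
      (nhds (Real.Gamma (2*α+1) * Real.Gamma (γ+1) / Real.Gamma (2*α+γ+2)
        / (2*α+β+γ+2))) := by
  have ha : -1 < 2 * α := by linarith
  have habγ : -2 < 2 * α + β + γ := by linarith
  have hF' : ∀ t : ℝ, t ^ (-(β + γ)) * F t = ∫ s in Ioc (0 : ℝ) 1,
      (s ^ (2 * α) * ∫ u in s..1, u ^ β * (u - s) ^ γ) *
        (t ^ (-(β + γ)) * ∫ v in t..t + 1, v ^ β * (v - s) ^ γ) := by
    intro t
    rw [hF, intervalIntegral.integral_of_le zero_le_one, ← integral_const_mul]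
    congr 1 with s
    ring
  rw [← integral_rpow_mul_integral_rpow_mul_sub_rpow ha hγ habγ,
    intervalIntegral.integral_of_le zero_le_one, ← one_mul (∫ s in Ioc (0 : ℝ) 1, _)]
  refine Tendsto.congr (fun t => (hF' t).symm) (tendsto_integral_mul_of_mem_Icc
    (integrableOn_rpow_mul_integral_rpow_mul_sub_rpow ha hγ habγ)
    ((ae_restrict_mem measurableSet_Ioc).mono fun s hs =>
      rpow_mul_integral_rpow_mul_sub_rpow_nonneg hs)
    (Eventually.of_forall fun t => (stronglyMeasurable_integral_rpow_mul_sub_rpow β γ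
      (by linarith)).aestronglyMeasurable.const_mul _)
    ((eventually_gt_atTop 1).mono fun t ht => (ae_restrict_mem measurableSet_Ioc).mono fun s hs =>
      rpow_neg_mul_integral_rpow_mul_sub_rpow_mem_Icc ht (Ioc_subset_Icc_self hs)) ?_ ?_)
  · simpa [Function.comp_def] using ((tendsto_min_rpow_one_sub_one_add β).mul
      (tendsto_min_rpow_one_sub_one_add γ)).comp tendsto_inv_atTop_zero
  · simpa [Function.comp_def] using ((tendsto_max_rpow_one_sub_one_add β).mul
      (tendsto_max_rpow_one_sub_one_add γ)).comp tendsto_inv_atTop_zero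
end

section
/- Let α, β, γ be real numbers with α > -1/2, γ > -1 and α + β + γ > -3/2, and suppose β + γ < −1. For t ≥ 1 define F(t) = ∫₀¹ s^{2α} (∫ₛ¹ u^β (u−s)^γ du) (∫ₜ^{t+1} v^β (v−s)^γ dv) ds. Then the series ∑_{n=1}^∞ F(n) converges and the integral ∫₁^∞ F(t) dt is finite. -/
open MeasureTheory intervalIntegral Set

/-!
Write `F(t) = ∫₀¹ s^{2α} A(s) B(t, s) ds`. Splitting `[s, 1]` at `2s`, where `u^β ≍ s^β` on
`[s, 2s]` and `u - s ≍ u` beyond, gives `A(s) ≤ C s^{β+γ+1}`; in the same way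
`B(t, s) ≤ C t^{β+γ}` uniformly in `s ∈ [0, 1]`. Since `2α + β + γ + 1 > -1`, integrating in `s`
yields `0 ≤ F(t) ≤ K t^{β+γ}`, and `β + γ < -1` makes `t^{β+γ}` summable and integrable on `[1, ∞)`.
-/

lemma rpow_le_rpow_abs_mul_rpow {x y c : ℝ} (hx : 0 < x) (hy : 0 < y)
    (hxy : x ≤ c * y) (hyx : y ≤ c * x) (p : ℝ) : x ^ p ≤ c ^ |p| * y ^ p := by
  have hc : 0 < c := pos_of_mul_pos_left (hx.trans_le hxy) hy.le
  have hratio : (x / y) ^ p ≤ c ^ |p| := by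
    rcases le_or_gt 0 p with hp | hp
    · rw [abs_of_nonneg hp]
      exact Real.rpow_le_rpow (div_pos hx hy).le ((div_le_iff₀ hy).2 hxy) hp
    · rw [abs_of_neg hp, Real.rpow_neg hc.le, ← Real.inv_rpow hc.le]
      refine Real.rpow_le_rpow_of_nonpos (inv_pos.2 hc) ?_ hp.le
      rw [inv_le_iff_one_le_mul₀ hc, div_mul_eq_mul_div, le_div_iff₀ hy, one_mul, mul_comm]
      exact hyx
  calc x ^ p = (x / y) ^ p * y ^ p := by
        rw [Real.div_rpow hx.le hy.le, div_mul_cancel₀ _ (Real.rpow_pos_of_pos hy p).ne']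
    _ ≤ c ^ |p| * y ^ p := by gcongr

section Kernel

variable {β γ s : ℝ}

lemma rpow_mul_sub_rpow_nonneg {u : ℝ} (hs : 0 ≤ s) (hsu : s ≤ u) :
    0 ≤ u ^ β * (u - s) ^ γ :=
  mul_nonneg (Real.rpow_nonneg (hs.trans hsu) β) (Real.rpow_nonneg (sub_nonneg.2 hsu) γ)

lemma integral_rpow_mul_sub_rpow_nonneg {a b : ℝ} (hs : 0 ≤ s) (hsa : s ≤ a) (hab : a ≤ b) :
    0 ≤ ∫ u in a..b, u ^ β * (u - s) ^ γ :=
  integral_nonneg hab fun _ hu => rpow_mul_sub_rpow_nonneg hs (hsa.trans hu.1)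

lemma intervalIntegrable_sub_rpow (hγ : -1 < γ) (a b : ℝ) :
    IntervalIntegrable (fun x => (x - s) ^ γ) volume a b := by
  simpa using (intervalIntegrable_rpow' (a := a - s) (b := b - s) hγ).comp_sub_right s

lemma intervalIntegrable_rpow_mul_sub_rpow (hγ : -1 < γ) {a b : ℝ} (ha : 0 < a) (hab : a ≤ b) :
    IntervalIntegrable (fun u => u ^ β * (u - s) ^ γ) volume a b := by
  refine (intervalIntegrable_sub_rpow hγ a b).continuousOn_mul fun x hx => ?_
  rw [uIcc_of_le hab] at hx
  exact (Real.continuousAt_rpow_const x β (Or.inl (ha.trans_le hx.1).ne')).continuousWithinAt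

lemma integral_sub_rpow (hγ : -1 < γ) (a b : ℝ) :
    ∫ x in a..b, (x - s) ^ γ = ((b - s) ^ (γ + 1) - (a - s) ^ (γ + 1)) / (γ + 1) := by
  rw [integral_comp_sub_right (fun x => x ^ γ), integral_rpow (Or.inl hγ)]

lemma integral_rpow_le_of_lt_neg_one {p a b : ℝ} (hp : p < -1) (ha : 0 < a) (hab : a ≤ b) :
    ∫ x in a..b, x ^ p ≤ a ^ (p + 1) / -(p + 1) := by
  rw [integral_rpow (Or.inr ⟨hp.ne, notMem_uIcc_of_lt ha (ha.trans_le hab)⟩)]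
  have hb : 0 ≤ b ^ (p + 1) := Real.rpow_nonneg (ha.le.trans hab) _
  calc (b ^ (p + 1) - a ^ (p + 1)) / (p + 1) = (a ^ (p + 1) - b ^ (p + 1)) / -(p + 1) := by
        rw [div_neg, ← neg_div, neg_sub]
    _ ≤ a ^ (p + 1) / -(p + 1) := div_le_div_of_nonneg_right (by linarith) (by linarith)

lemma integral_self_two_mul_rpow_mul_sub_rpow_le (hγ : -1 < γ) (hs : 0 < s) :
    ∫ u in s..2 * s, u ^ β * (u - s) ^ γ ≤ 2 ^ |β| / (γ + 1) * s ^ (β + γ + 1) := by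
  have hle : ∀ u ∈ Icc s (2 * s), u ^ β * (u - s) ^ γ ≤ 2 ^ |β| * s ^ β * (u - s) ^ γ := by
    intro u hu
    have hu0 : 0 < u := hs.trans_le hu.1
    gcongr
    · exact Real.rpow_nonneg (sub_nonneg.2 hu.1) γ
    · exact rpow_le_rpow_abs_mul_rpow hu0 hs hu.2 (by linarith [hu.1]) β
  calc ∫ u in s..2 * s, u ^ β * (u - s) ^ γ
      ≤ ∫ u in s..2 * s, 2 ^ |β| * s ^ β * (u - s) ^ γ :=
        integral_mono_on (by linarith) (intervalIntegrable_rpow_mul_sub_rpow hγ hs (by linarith))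
          ((intervalIntegrable_sub_rpow hγ _ _).const_mul _) hle
    _ = 2 ^ |β| / (γ + 1) * (s ^ β * s ^ (γ + 1)) := by
        rw [intervalIntegral.integral_const_mul, integral_sub_rpow hγ, sub_self,
          Real.zero_rpow (by linarith), two_mul, add_sub_cancel_right]
        ring
    _ = 2 ^ |β| / (γ + 1) * s ^ (β + γ + 1) := by rw [← Real.rpow_add hs, add_assoc]

lemma rpow_mul_sub_rpow_le_of_two_mul_le {u : ℝ} (hs : 0 ≤ s) (hu : 0 < u) (hsu : 2 * s ≤ u) :
    u ^ β * (u - s) ^ γ ≤ 2 ^ |γ| * u ^ (β + γ) := by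
  have hus : (u - s) ^ γ ≤ 2 ^ |γ| * u ^ γ :=
    rpow_le_rpow_abs_mul_rpow (by linarith) hu (by linarith) (by linarith) γ
  calc u ^ β * (u - s) ^ γ ≤ u ^ β * (2 ^ |γ| * u ^ γ) := by gcongr
    _ = 2 ^ |γ| * u ^ (β + γ) := by rw [Real.rpow_add hu]; ring

lemma exists_integral_self_one_rpow_mul_sub_rpow_le (hγ : -1 < γ) (hβγ : β + γ < -1) :
    ∃ C, ∀ s ∈ Ioc (0 : ℝ) 1, ∫ u in s..1, u ^ β * (u - s) ^ γ ≤ C * s ^ (β + γ + 1) := by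
  refine ⟨2 ^ |β| / (γ + 1) + 2 ^ |γ| * (2 ^ (β + γ + 1) / -(β + γ + 1)), fun s ⟨hs0, hs1⟩ => ?_⟩
  -- enlarging `[s, 1]` to `[s, max 1 (2s)]` lets the split at `2s` also cover `s > 1/2`
  set M := max 1 (2 * s)
  have h2s : 0 < 2 * s := by linarith
  have hfar : ∫ u in 2 * s..M, u ^ β * (u - s) ^ γ ≤ 2 ^ |γ| * ∫ u in 2 * s..M, u ^ (β + γ) := by
    rw [← intervalIntegral.integral_const_mul]
    refine integral_mono_on (le_max_right _ _)
      (intervalIntegrable_rpow_mul_sub_rpow hγ h2s (le_max_right _ _)) ?_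
      fun u hu => rpow_mul_sub_rpow_le_of_two_mul_le hs0.le (h2s.trans_le hu.1) hu.1
    exact (intervalIntegrable_rpow (Or.inr (notMem_uIcc_of_lt h2s (h2s.trans_le
      (le_max_right _ _))))).const_mul _
  calc ∫ u in s..1, u ^ β * (u - s) ^ γ
      ≤ ∫ u in s..M, u ^ β * (u - s) ^ γ :=
        integral_mono_interval le_rfl hs1 (le_max_left _ _)
          (ae_restrict_of_forall_mem measurableSet_Ioc fun u hu =>
            rpow_mul_sub_rpow_nonneg hs0.le hu.1.le)
          (intervalIntegrable_rpow_mul_sub_rpow hγ hs0 (hs1.trans (le_max_left _ _)))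
    _ = (∫ u in s..2 * s, u ^ β * (u - s) ^ γ) + ∫ u in 2 * s..M, u ^ β * (u - s) ^ γ :=
        (integral_add_adjacent_intervals
          (intervalIntegrable_rpow_mul_sub_rpow hγ hs0 (by linarith))
          (intervalIntegrable_rpow_mul_sub_rpow hγ h2s (le_max_right _ _))).symm
    _ ≤ 2 ^ |β| / (γ + 1) * s ^ (β + γ + 1)
          + 2 ^ |γ| * ((2 * s) ^ (β + γ + 1) / -(β + γ + 1)) := by
        gcongr
        · exact integral_self_two_mul_rpow_mul_sub_rpow_le hγ hs0
        · refine hfar.trans ?_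
          gcongr
          exact integral_rpow_le_of_lt_neg_one hβγ h2s (le_max_right _ _)
    _ = _ := by rw [Real.mul_rpow zero_le_two hs0.le]; ring

lemma integral_add_one_rpow_mul_sub_rpow_le_of_two_le (hγ : -1 < γ) (hβγ : β + γ ≤ 0)
    (hs0 : 0 ≤ s) (hs1 : s ≤ 1) {t : ℝ} (ht : 2 ≤ t) :
    ∫ v in t..t + 1, v ^ β * (v - s) ^ γ ≤ 2 ^ |γ| * t ^ (β + γ) := by
  have ht0 : 0 < t := by linarith
  have hle : ∀ v ∈ Icc t (t + 1), v ^ β * (v - s) ^ γ ≤ 2 ^ |γ| * t ^ (β + γ) := fun v hv =>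
    calc v ^ β * (v - s) ^ γ ≤ 2 ^ |γ| * v ^ (β + γ) :=
          rpow_mul_sub_rpow_le_of_two_mul_le hs0 (ht0.trans_le hv.1) (by linarith [hv.1])
      _ ≤ 2 ^ |γ| * t ^ (β + γ) :=
          mul_le_mul_of_nonneg_left (Real.rpow_le_rpow_of_nonpos ht0 hv.1 hβγ) (by positivity)
  calc ∫ v in t..t + 1, v ^ β * (v - s) ^ γ ≤ ∫ _ in t..t + 1, 2 ^ |γ| * t ^ (β + γ) :=
        integral_mono_on (by linarith) (intervalIntegrable_rpow_mul_sub_rpow hγ ht0 (by linarith))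
          intervalIntegrable_const hle
    _ = 2 ^ |γ| * t ^ (β + γ) := by simp

lemma integral_add_one_rpow_mul_sub_rpow_le_of_le_two (hγ : -1 < γ)
    (hs0 : 0 ≤ s) (hs1 : s ≤ 1) {t : ℝ} (ht1 : 1 ≤ t) (ht2 : t ≤ 2) :
    ∫ v in t..t + 1, v ^ β * (v - s) ^ γ ≤ 3 ^ |β| * (3 ^ (γ + 1) / (γ + 1)) := by
  have hγ1 : 0 < γ + 1 := by linarith
  have hle : ∀ v ∈ Icc t (t + 1), v ^ β * (v - s) ^ γ ≤ 3 ^ |β| * (v - s) ^ γ := by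
    intro v hv
    have hvβ : v ^ β ≤ 3 ^ |β| * 1 ^ β :=
      rpow_le_rpow_abs_mul_rpow (by linarith [hv.1]) one_pos (by linarith [hv.2])
        (by linarith [hv.1]) β
    rw [Real.one_rpow, mul_one] at hvβ
    gcongr
    exact Real.rpow_nonneg (by linarith [hv.1]) γ
  calc ∫ v in t..t + 1, v ^ β * (v - s) ^ γ ≤ ∫ v in t..t + 1, 3 ^ |β| * (v - s) ^ γ :=
        integral_mono_on (by linarith)
          (intervalIntegrable_rpow_mul_sub_rpow hγ (by linarith) (by linarith))
          ((intervalIntegrable_sub_rpow hγ _ _).const_mul _) hle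
    _ = 3 ^ |β| * (((t + 1 - s) ^ (γ + 1) - (t - s) ^ (γ + 1)) / (γ + 1)) := by
        rw [intervalIntegral.integral_const_mul, integral_sub_rpow hγ]
    _ ≤ 3 ^ |β| * (3 ^ (γ + 1) / (γ + 1)) := by
        have h0 : 0 ≤ (t - s) ^ (γ + 1) := Real.rpow_nonneg (by linarith) _
        have h3 : (t + 1 - s) ^ (γ + 1) ≤ 3 ^ (γ + 1) :=
          Real.rpow_le_rpow (by linarith) (by linarith) hγ1.le
        gcongr
        linarith

lemma exists_integral_add_one_rpow_mul_sub_rpow_le (hγ : -1 < γ) (hβγ : β + γ < -1) :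
    ∃ C, ∀ t, 1 ≤ t → ∀ s ∈ Icc (0 : ℝ) 1,
      ∫ v in t..t + 1, v ^ β * (v - s) ^ γ ≤ C * t ^ (β + γ) := by
  set C₂ := 3 ^ |β| * (3 ^ (γ + 1) / (γ + 1))
  refine ⟨max (2 ^ |γ|) (C₂ * 2 ^ (-(β + γ))), fun t ht s ⟨hs0, hs1⟩ => ?_⟩
  have htp : 0 ≤ t ^ (β + γ) := Real.rpow_nonneg (by linarith) _
  rcases le_total 2 t with h2 | h2
  · calc _ ≤ 2 ^ |γ| * t ^ (β + γ) :=
          integral_add_one_rpow_mul_sub_rpow_le_of_two_le hγ (by linarith) hs0 hs1 h2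
      _ ≤ _ := mul_le_mul_of_nonneg_right (le_max_left _ _) htp
  · calc _ ≤ C₂ := integral_add_one_rpow_mul_sub_rpow_le_of_le_two hγ hs0 hs1 ht h2
      _ = C₂ * 2 ^ (-(β + γ)) * 2 ^ (β + γ) := by
          rw [mul_assoc, ← Real.rpow_add two_pos, neg_add_cancel, Real.rpow_zero, mul_one]
      _ ≤ C₂ * 2 ^ (-(β + γ)) * t ^ (β + γ) := by
          have hC₂ : 0 ≤ C₂ * 2 ^ (-(β + γ)) :=
            mul_nonneg (mul_nonneg (by positivity) (div_nonneg (by positivity) (by linarith)))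
              (by positivity)
          exact mul_le_mul_of_nonneg_left
            (Real.rpow_le_rpow_of_nonpos (by linarith) h2 (by linarith)) hC₂
      _ ≤ _ := mul_le_mul_of_nonneg_right (le_max_right _ _) htp

end Kernel

noncomputable def incrementCovariance (α β γ t : ℝ) : ℝ :=
  ∫ s in (0 : ℝ)..1, s ^ (2 * α) * (∫ u in s..1, u ^ β * (u - s) ^ γ) *
    (∫ v in t..(t + 1), v ^ β * (v - s) ^ γ)

section Covariance

variable {α β γ : ℝ}

lemma incrementCovariance_integrand_nonneg {s t : ℝ} (hs : s ∈ Icc (0 : ℝ) 1) (ht : 1 ≤ t) :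
    0 ≤ s ^ (2 * α) * (∫ u in s..1, u ^ β * (u - s) ^ γ) *
      (∫ v in t..(t + 1), v ^ β * (v - s) ^ γ) :=
  mul_nonneg (mul_nonneg (Real.rpow_nonneg hs.1 _)
    (integral_rpow_mul_sub_rpow_nonneg hs.1 le_rfl hs.2))
    (integral_rpow_mul_sub_rpow_nonneg hs.1 (hs.2.trans ht) (by linarith))

lemma incrementCovariance_nonneg {t : ℝ} (ht : 1 ≤ t) : 0 ≤ incrementCovariance α β γ t :=
  integral_nonneg zero_le_one fun _ hs => incrementCovariance_integrand_nonneg hs ht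

lemma incrementCovariance_le_rpow (hγ : -1 < γ) (hβγ : β + γ < -1)
    (hα : -1 < 2 * α + (β + γ + 1)) :
    ∃ K, ∀ t, 1 ≤ t → incrementCovariance α β γ t ≤ K * t ^ (β + γ) := by
  obtain ⟨Ca, hA⟩ := exists_integral_self_one_rpow_mul_sub_rpow_le hγ hβγ
  obtain ⟨Cb, hB⟩ := exists_integral_add_one_rpow_mul_sub_rpow_le hγ hβγ
  refine ⟨Ca * Cb * ∫ s in Ioc (0 : ℝ) 1, s ^ (2 * α + (β + γ + 1)), fun t ht => ?_⟩
  have hle : ∀ s ∈ Ioc (0 : ℝ) 1, s ^ (2 * α) * (∫ u in s..1, u ^ β * (u - s) ^ γ) *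
      (∫ v in t..(t + 1), v ^ β * (v - s) ^ γ)
        ≤ Ca * Cb * t ^ (β + γ) * s ^ (2 * α + (β + γ + 1)) := by
    intro s hs
    have hA0 := integral_rpow_mul_sub_rpow_nonneg (β := β) (γ := γ) hs.1.le le_rfl hs.2
    have hB0 := integral_rpow_mul_sub_rpow_nonneg (β := β) (γ := γ) hs.1.le (hs.2.trans ht)
      (by linarith : t ≤ t + 1)
    calc _ ≤ s ^ (2 * α) * (Ca * s ^ (β + γ + 1)) * (Cb * t ^ (β + γ)) :=
          mul_le_mul (mul_le_mul_of_nonneg_left (hA s hs) (Real.rpow_nonneg hs.1.le _))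
            (hB t ht s (Ioc_subset_Icc_self hs)) hB0
            (mul_nonneg (Real.rpow_nonneg hs.1.le _) (hA0.trans (hA s hs)))
      _ = _ := by rw [Real.rpow_add hs.1 (2 * α)]; ring
  calc incrementCovariance α β γ t
      ≤ ∫ s in Ioc (0 : ℝ) 1, Ca * Cb * t ^ (β + γ) * s ^ (2 * α + (β + γ + 1)) := by
        rw [incrementCovariance, integral_of_le zero_le_one]
        -- `integral_mono_of_nonneg` spares us the measurability of the parametric integrals
        exact integral_mono_of_nonneg
          (ae_restrict_of_forall_mem measurableSet_Ioc fun s hs =>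
            incrementCovariance_integrand_nonneg (Ioc_subset_Icc_self hs) ht)
          ((intervalIntegrable_rpow' hα).1.const_mul _)
          (ae_restrict_of_forall_mem measurableSet_Ioc hle)
    _ = _ := by rw [MeasureTheory.integral_const_mul]; ring

end Covariance

lemma summable_nat_add_one_of_le_rpow {f : ℝ → ℝ} {K p : ℝ} (hp : p < -1)
    (h0 : ∀ t, 1 ≤ t → 0 ≤ f t) (hle : ∀ t, 1 ≤ t → f t ≤ K * t ^ p) :
    Summable fun n : ℕ => f (n + 1) := by
  have hn : ∀ n : ℕ, (1 : ℝ) ≤ n + 1 := fun n => by linarith [n.cast_nonneg (α := ℝ)]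
  have hsum : Summable fun n : ℕ => K * ((n + 1 : ℕ) : ℝ) ^ p :=
    ((summable_nat_add_iff 1).2 (Real.summable_nat_rpow.2 hp)).mul_left K
  refine hsum.of_nonneg_of_le (fun n => h0 _ (hn n)) fun n => ?_
  push_cast
  exact hle _ (hn n)

lemma setLIntegral_Ici_ofReal_lt_top_of_le_rpow {f : ℝ → ℝ} {K p : ℝ} (hp : p < -1)
    (hle : ∀ t, 1 ≤ t → f t ≤ K * t ^ p) :
    ∫⁻ t in Ici 1, ENNReal.ofReal (f t) < ⊤ := by
  calc ∫⁻ t in Ici 1, ENNReal.ofReal (f t) ≤ ∫⁻ t in Ioi 1, ENNReal.ofReal (K * t ^ p) := by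
        rw [← Measure.restrict_congr_set Ioi_ae_eq_Ici]
        exact setLIntegral_mono (by fun_prop) fun t ht => ENNReal.ofReal_le_ofReal (hle t ht.le)
    _ < ⊤ := IntegrableOn.setLIntegral_lt_top
          ((integrableOn_Ioi_rpow_of_lt hp one_pos).const_mul K)

theorem stmt_2_general (α β γ : ℝ) (hγ : -1 < γ)
    (hαβγ : -(3/2 : ℝ) < α + β + γ) (hβγ : β + γ < -1)
    (F : ℝ → ℝ)
    (hF : ∀ t : ℝ, F t = ∫ s in (0:ℝ)..1, s ^ (2*α) *
      (∫ u in s..1, u ^ β * (u - s) ^ γ) *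
      (∫ v in t..(t+1), v ^ β * (v - s) ^ γ)) :
    (Summable fun n : ℕ => F (n + 1)) ∧
    (∫⁻ t in Set.Ici (1:ℝ), ENNReal.ofReal (F t)) < ⊤ := by
  obtain rfl : F = incrementCovariance α β γ := funext hF
  obtain ⟨K, hK⟩ := incrementCovariance_le_rpow (α := α) hγ hβγ (by linarith)
  exact ⟨summable_nat_add_one_of_le_rpow hβγ (fun _ => incrementCovariance_nonneg) hK,
    setLIntegral_Ici_ofReal_lt_top_of_le_rpow hβγ hK⟩

/-- Theorem 3.3 (short-range dependence): if `β + γ < -1` then the series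
`∑_{n≥1} cov(X₁, X_{n+1} - X_n)` converges and `∫₁^∞ cov(X₁, X_{t+1} - X_t) dt`
is finite. -/
theorem stmt_2 (α β γ : ℝ) (hα : -(1/2 : ℝ) < α) (hγ : -1 < γ)
    (hαβγ : -(3/2 : ℝ) < α + β + γ) (hβγ : β + γ < -1)
    (F : ℝ → ℝ)
    (hF : ∀ t : ℝ, F t = ∫ s in (0:ℝ)..1, s ^ (2*α) *
      (∫ u in s..1, u ^ β * (u - s) ^ γ) *
      (∫ v in t..(t+1), v ^ β * (v - s) ^ γ)) :
    (Summable fun n : ℕ => F (n + 1)) ∧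
    (∫⁻ t in Set.Ici (1:ℝ), ENNReal.ofReal (F t)) < ⊤ :=
  stmt_2_general α β γ hγ hαβγ hβγ F hF
end

section
/- Let α, β, γ be real numbers with α > -1/2, α + β + γ > -3/2, and γ > −1/2. For t ≥ 0 define V(t) = ∫₀^{t+1} s^{2α} (∫_{max(s,t)}^{t+1} u^β (u−s)^γ du)² ds. Then lim_{t→+∞} V(t) / t^{2α+2β+2γ+1} = B(2α+1, 2γ+1), where B(a,b) = Γ(a)Γ(b)/Γ(a+b) is the Beta function. -/
/-!
Substituting `s = (t+1) x` and `u = (t+1) y` and writing `b = t/(t+1)` turns `V t` into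
`(t+1)^(2α+2β+2γ+1) ∫₀¹ x^(2α) K_b(x)² dx`, where
`K_b(x) = (1-b)⁻¹ ∫_{max x b}^1 y^β (y-x)^γ dy` (`tailAverage`). For fixed `x < 1`, `K_b(x)`
is eventually a difference quotient at `1` of a primitive of `y ↦ y^β (y-x)^γ`, hence tends to
`(1-x)^γ` as `b → 1⁻`; and `K_b(x) ≤ C (1-x)^γ` uniformly for `b ≥ 1/2`. Dominated convergence
leaves the Beta integral `∫₀¹ x^(2α) (1-x)^(2γ) dx = B(2α+1, 2γ+1)`.
-/

open MeasureTheory Filter intervalIntegral Set Topology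

lemma rpow_le_two_rpow_abs_mul_rpow (β : ℝ) {a b : ℝ} (ha : 0 < a) (hab : a ≤ 2 * b)
    (hba : b ≤ 2 * a) : a ^ β ≤ 2 ^ |β| * b ^ β := by
  have hb : 0 < b := by linarith
  have hr : (a / b) ^ β ≤ 2 ^ |β| := by
    rcases le_total 0 β with hβ | hβ
    · calc (a / b) ^ β ≤ 2 ^ β :=
            Real.rpow_le_rpow (by positivity) ((div_le_iff₀ hb).2 (by linarith)) hβ
        _ = 2 ^ |β| := by rw [abs_of_nonneg hβ]
    · calc (a / b) ^ β ≤ 2⁻¹ ^ β :=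
            Real.rpow_le_rpow_of_nonpos (by norm_num) ((le_div_iff₀ hb).2 (by linarith)) hβ
        _ = 2 ^ |β| := by
            rw [abs_of_nonpos hβ, Real.inv_rpow zero_le_two, Real.rpow_neg zero_le_two]
  calc a ^ β = (a / b) ^ β * b ^ β := by
        rw [Real.div_rpow ha.le hb.le, div_mul_cancel₀ _ (by positivity)]
    _ ≤ 2 ^ |β| * b ^ β := by gcongr

lemma setIntegral_rpow_Ioc_max_le {γ : ℝ} (hγ : -1 < γ) {a L : ℝ} (hL : 0 < L)
    (haL : a < L) :
    ∫ v in Ioc (max 0 a) L, v ^ γ ≤ (2 / (γ + 1) + 2 ^ |γ|) * (L - a) * L ^ γ := by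
  have hγ1 : 0 < γ + 1 := by linarith
  -- Near the singularity at `0` integrate exactly; away from it `v ^ γ ≍ L ^ γ` on `(a, L]`.
  rcases le_or_gt L (2 * (L - a)) with hnear | hfar
  · have hsub : ∫ v in Ioc (max 0 a) L, v ^ γ ≤ ∫ v in Ioc 0 L, v ^ γ := by
      refine setIntegral_mono_set ?_ ?_ ?_
      · exact (intervalIntegrable_iff_integrableOn_Ioc_of_le hL.le).1
          (intervalIntegral.intervalIntegrable_rpow' hγ)
      · exact (ae_restrict_mem measurableSet_Ioc).mono fun v hv => by
          simpa using Real.rpow_nonneg hv.1.le γ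
      · exact (Ioc_subset_Ioc_left (le_max_left 0 a)).eventuallyLE
    have hval : ∫ v in Ioc 0 L, v ^ γ = L * L ^ γ / (γ + 1) := by
      rw [← intervalIntegral.integral_of_le hL.le, integral_rpow (Or.inl hγ),
        Real.rpow_add_one hL.ne', Real.zero_rpow hγ1.ne']
      ring
    calc ∫ v in Ioc (max 0 a) L, v ^ γ ≤ L * L ^ γ / (γ + 1) := hval ▸ hsub
      _ ≤ 2 * (L - a) * L ^ γ / (γ + 1) := by gcongr
      _ = 2 / (γ + 1) * (L - a) * L ^ γ := by ring
      _ ≤ _ := by have := sub_pos.2 haL; gcongr; exact le_add_of_nonneg_right (by positivity)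
  · have ha : 0 < a := by linarith
    rw [max_eq_right ha.le]
    have hbound : ∀ v ∈ Ioc a L, ‖v ^ γ‖ ≤ 2 ^ |γ| * L ^ γ := by
      intro v hv
      rw [Real.norm_of_nonneg (Real.rpow_nonneg (ha.trans hv.1).le γ)]
      exact rpow_le_two_rpow_abs_mul_rpow γ (ha.trans hv.1) (by linarith [hv.2])
        (by linarith [hv.1])
    have h := norm_setIntegral_le_of_norm_le_const (μ := volume) measure_Ioc_lt_top hbound
    rw [Real.volume_real_Ioc_of_le haL.le] at h
    calc ∫ v in Ioc a L, v ^ γ ≤ 2 ^ |γ| * L ^ γ * (L - a) := (le_abs_self _).trans h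
      _ = 2 ^ |γ| * (L - a) * L ^ γ := by ring
      _ ≤ _ := by have := sub_pos.2 haL; gcongr; exact le_add_of_nonneg_left (by positivity)

lemma stronglyMeasurable_setIntegral_Ioc {α E : Type*} [MeasurableSpace α]
    [NormedAddCommGroup E] [NormedSpace ℝ E] {f : α × ℝ → E} (hf : StronglyMeasurable f)
    {a b : α → ℝ} (ha : Measurable a) (hb : Measurable b) :
    StronglyMeasurable fun x => ∫ y in Ioc (a x) (b x), f (x, y) := by
  have hS : MeasurableSet {p : α × ℝ | a p.1 < p.2 ∧ p.2 ≤ b p.1} :=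
    (measurableSet_lt (ha.comp measurable_fst) measurable_snd).inter
      (measurableSet_le measurable_snd (hb.comp measurable_fst))
  convert (hf.indicator hS).integral_prod_right' (ν := volume) using 2 with x
  rw [← MeasureTheory.integral_indicator measurableSet_Ioc]
  rfl

lemma betaIntegrand_eq_ofReal (p q : ℝ) :
    EqOn (fun x : ℝ => (x : ℂ) ^ ((p + 1 : ℝ) - 1 : ℂ) *
        (1 - (x : ℂ)) ^ ((q + 1 : ℝ) - 1 : ℂ))
      (fun x : ℝ => ((x ^ p * (1 - x) ^ q : ℝ) : ℂ)) (uIcc 0 1) := by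
  intro x hx
  rw [uIcc_of_le zero_le_one] at hx
  push_cast
  rw [add_sub_cancel_right, add_sub_cancel_right, ← Complex.ofReal_cpow hx.1,
    ← Complex.ofReal_one, ← Complex.ofReal_sub, ← Complex.ofReal_cpow (sub_nonneg.2 hx.2)]

lemma intervalIntegrable_rpow_mul_one_sub_rpow {p q : ℝ} (hp : -1 < p) (hq : -1 < q) :
    IntervalIntegrable (fun x => x ^ p * (1 - x) ^ q) volume 0 1 := by
  have h := (Complex.betaIntegral_convergent (u := (p + 1 : ℝ)) (v := (q + 1 : ℝ))
    (by simpa using neg_lt_iff_pos_add.1 hp) (by simpa using neg_lt_iff_pos_add.1 hq)).congr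
    ((betaIntegrand_eq_ofReal p q).mono Ioc_subset_Icc_self)
  simpa using intervalIntegrable_iff.2 (intervalIntegrable_iff.1 h).re

lemma integral_rpow_mul_one_sub_rpow {p q : ℝ} (hp : -1 < p) (hq : -1 < q) :
    ∫ x in (0 : ℝ)..1, x ^ p * (1 - x) ^ q
      = Real.Gamma (p + 1) * Real.Gamma (q + 1) / Real.Gamma (p + q + 2) := by
  have h := Complex.betaIntegral_eq_Gamma_mul_div (p + 1 : ℝ) (q + 1 : ℝ)
    (by simpa using neg_lt_iff_pos_add.1 hp) (by simpa using neg_lt_iff_pos_add.1 hq)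
  rw [Complex.betaIntegral, integral_congr (betaIntegrand_eq_ofReal p q), integral_ofReal,
    ← Complex.ofReal_add, Complex.Gamma_ofReal, Complex.Gamma_ofReal, Complex.Gamma_ofReal] at h
  rw [show p + 1 + (q + 1) = p + q + 2 by ring] at h
  exact_mod_cast h

lemma tendsto_div_add_one_atTop_nhdsLT_one :
    Tendsto (fun t : ℝ => t / (t + 1)) atTop (𝓝[<] 1) := by
  refine tendsto_nhdsWithin_iff.2 ⟨?_, ?_⟩
  · have h : Tendsto (fun t : ℝ => 1 - (t + 1)⁻¹) atTop (𝓝 (1 - 0)) :=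
      tendsto_const_nhds.sub
        (tendsto_inv_atTop_zero.comp (tendsto_atTop_add_const_right _ 1 tendsto_id))
    rw [sub_zero] at h
    refine h.congr' ?_
    filter_upwards [eventually_gt_atTop 0] with t ht
    field_simp
    ring
  · filter_upwards [eventually_gt_atTop 0] with t ht
    exact (div_lt_one (by positivity)).2 (lt_add_one t)

noncomputable def tailAverage (β γ b x : ℝ) : ℝ :=
  (1 - b)⁻¹ * ∫ y in Ioc (max x b) 1, y ^ β * (y - x) ^ γ

lemma integral_max_eq_rpow_mul_tailAverage (β γ : ℝ) {t x : ℝ} (ht : 0 < t) (hx : x ≤ 1) :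
    ∫ u in (max ((t + 1) * x) t)..(t + 1), u ^ β * (u - (t + 1) * x) ^ γ
      = (t + 1) ^ (β + γ) * tailAverage β γ (t / (t + 1)) x := by
  set c := t + 1
  have hc : 0 < c := by positivity
  set b := t / c
  have hb : 0 ≤ b := by positivity
  have hb1 : b ≤ 1 := (div_le_one hc).2 (by linarith)
  set m := max x b
  have hm : m ≤ 1 := max_le hx hb1
  have hscale : EqOn (fun y => (c * y) ^ β * (c * y - c * x) ^ γ)
      (fun y => c ^ (β + γ) * (y ^ β * (y - x) ^ γ)) (uIcc m 1) := fun y hy => by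
    rw [uIcc_of_le hm] at hy
    have hy0 : 0 ≤ y := (le_max_right x b).trans hy.1 |> hb.trans
    have hxy : 0 ≤ y - x := sub_nonneg.2 ((le_max_left x b).trans hy.1)
    simp only
    rw [← mul_sub, Real.mul_rpow hc.le hy0, Real.mul_rpow hc.le hxy, Real.rpow_add hc]
    ring
  calc ∫ u in (max (c * x) t)..c, u ^ β * (u - c * x) ^ γ
      = ∫ u in (c * m)..(c * 1), u ^ β * (u - c * x) ^ γ := by
        rw [mul_max_of_nonneg _ _ hc.le, mul_div_cancel₀ _ hc.ne', mul_one]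
    _ = c * ∫ y in m..1, (c * y) ^ β * (c * y - c * x) ^ γ := by
        rw [integral_comp_mul_left (fun u => u ^ β * (u - c * x) ^ γ) hc.ne', smul_eq_mul,
          mul_inv_cancel_left₀ hc.ne']
    _ = c ^ (β + γ) * tailAverage β γ b x := by
        have h1b : 1 - b = c⁻¹ := by simp only [b, c]; field_simp; ring
        rw [integral_congr hscale, intervalIntegral.integral_const_mul, tailAverage, h1b, inv_inv,
          integral_of_le hm]
        ring

lemma integral_rpow_mul_sq_eq_rpow_mul (p β γ : ℝ) {t : ℝ} (ht : 0 < t) :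
    ∫ s in (0 : ℝ)..(t + 1), s ^ p * (∫ u in (max s t)..(t + 1), u ^ β * (u - s) ^ γ) ^ 2
      = (t + 1) ^ (p + 2 * β + 2 * γ + 1)
        * ∫ x in (0 : ℝ)..1, x ^ p * tailAverage β γ (t / (t + 1)) x ^ 2 := by
  set c := t + 1
  have hc : 0 < c := by positivity
  have hpow : c ^ (p + 2 * β + 2 * γ + 1) = c * (c ^ p * (c ^ (β + γ)) ^ 2) := by
    rw [← Real.rpow_two, ← Real.rpow_mul hc.le, ← Real.rpow_add hc, mul_comm c,
      ← Real.rpow_add_one hc.ne']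
    ring_nf
  have hscale : EqOn
      (fun x => (c * x) ^ p * (∫ u in (max (c * x) t)..c, u ^ β * (u - c * x) ^ γ) ^ 2)
      (fun x => c ^ p * (c ^ (β + γ)) ^ 2 * (x ^ p * tailAverage β γ (t / c) x ^ 2))
      (uIcc 0 1) :=
    fun x hx => by
      rw [uIcc_of_le zero_le_one] at hx
      simp only
      rw [integral_max_eq_rpow_mul_tailAverage β γ ht hx.2, Real.mul_rpow hc.le hx.1]
      ring
  have h := integral_comp_mul_left
    (fun s => s ^ p * (∫ u in (max s t)..c, u ^ β * (u - s) ^ γ) ^ 2) hc.ne' (a := 0) (b := 1)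
  rw [mul_zero, mul_one, integral_congr hscale, intervalIntegral.integral_const_mul,
    smul_eq_mul] at h
  rw [hpow, mul_assoc, h, mul_inv_cancel_left₀ hc.ne']

lemma stronglyMeasurable_tailAverage (β γ b : ℝ) :
    StronglyMeasurable (tailAverage β γ b) := by
  have hf : Measurable fun p : ℝ × ℝ => p.2 ^ β * (p.2 - p.1) ^ γ := by fun_prop
  exact (stronglyMeasurable_setIntegral_Ioc hf.stronglyMeasurable
    (measurable_id.max measurable_const) measurable_const).const_mul _

lemma tailAverage_nonneg (β γ : ℝ) {b : ℝ} (hb0 : 0 ≤ b) (hb1 : b ≤ 1) (x : ℝ) :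
    0 ≤ tailAverage β γ b x := by
  refine mul_nonneg (inv_nonneg.2 (sub_nonneg.2 hb1)) (setIntegral_nonneg measurableSet_Ioc ?_)
  intro y hy
  obtain ⟨hxy, hby⟩ := max_lt_iff.1 hy.1
  exact mul_nonneg (Real.rpow_nonneg (by linarith) β) (Real.rpow_nonneg (by linarith) γ)

lemma tailAverage_le {β γ : ℝ} (hγ : -1 < γ) {b x : ℝ} (hb : 1 / 2 ≤ b) (hb1 : b < 1)
    (hx : x < 1) :
    tailAverage β γ b x ≤ 2 ^ |β| * (2 / (γ + 1) + 2 ^ |γ|) * (1 - x) ^ γ := by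
  have hxb1 : max x b ≤ 1 := max_le hx.le hb1.le
  have hshift : ∫ y in Ioc (max x b) 1, (y - x) ^ γ
      = ∫ v in Ioc (max 0 (b - x)) (1 - x), v ^ γ := by
    rw [← integral_of_le hxb1, integral_comp_sub_right (fun v => v ^ γ), ← max_sub_sub_right,
      sub_self, integral_of_le (max_le (by linarith) (by linarith))]
  have hint : IntegrableOn (fun y => 2 ^ |β| * (y - x) ^ γ) (Ioc (max x b) 1) := by
    refine (intervalIntegrable_iff_integrableOn_Ioc_of_le hxb1).1
      (IntervalIntegrable.const_mul ?_ _)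
    simpa using (intervalIntegrable_rpow' (a := max x b - x) (b := 1 - x) hγ).comp_sub_right x
  have hmono : ∫ y in Ioc (max x b) 1, y ^ β * (y - x) ^ γ
      ≤ ∫ y in Ioc (max x b) 1, 2 ^ |β| * (y - x) ^ γ := by
    refine setIntegral_mono_of_nonneg (fun y hy => ?_) (fun y hy => ?_) hint <;>
      obtain ⟨hxy, hby⟩ := max_lt_iff.1 hy.1
    · exact mul_nonneg (Real.rpow_nonneg (by linarith) β) (Real.rpow_nonneg (by linarith) γ)
    · refine mul_le_mul_of_nonneg_right ?_ (Real.rpow_nonneg (by linarith) γ)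
      simpa using rpow_le_two_rpow_abs_mul_rpow β (a := y) (b := 1) (by linarith)
        (by linarith [hy.2]) (by linarith)
  have hb1' : 0 < 1 - b := by linarith
  calc tailAverage β γ b x
      ≤ (1 - b)⁻¹ * (2 ^ |β| * ∫ v in Ioc (max 0 (b - x)) (1 - x), v ^ γ) := by
        rw [tailAverage, ← hshift, ← MeasureTheory.integral_const_mul (2 ^ |β|)]
        exact mul_le_mul_of_nonneg_left hmono (inv_nonneg.2 hb1'.le)
    _ ≤ (1 - b)⁻¹ * (2 ^ |β| * ((2 / (γ + 1) + 2 ^ |γ|) * (1 - b) * (1 - x) ^ γ)) := by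
        have := setIntegral_rpow_Ioc_max_le hγ (sub_pos.2 hx) (by linarith : b - x < 1 - x)
        rw [sub_sub_sub_cancel_right] at this
        gcongr
    _ = _ := by field_simp

lemma tendsto_tailAverage (β γ : ℝ) {x : ℝ} (hx : x < 1) :
    Tendsto (fun b => tailAverage β γ b x) (𝓝[<] 1) (𝓝 ((1 - x) ^ γ)) := by
  set f : ℝ → ℝ := fun y => y ^ β * (y - x) ^ γ
  set m := max x 0
  have hm : m < 1 := max_lt hx one_pos
  have hf : ContinuousOn f (Ioi m) := fun y hy => by
    have hxy := (le_max_left x 0).trans_lt hy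
    have h0y := (le_max_right x 0).trans_lt hy
    exact ((continuousAt_id.rpow_const (Or.inl h0y.ne')).mul
      ((continuousAt_id.sub continuousAt_const).rpow_const
        (Or.inl (sub_pos.2 hxy).ne'))).continuousWithinAt
  obtain ⟨c, hmc, hc1⟩ := exists_between hm
  have hfint : ∀ b ∈ Ioo c 2, IntervalIntegrable f volume c b := fun b hb =>
    (hf.mono fun y hy => by
      rw [uIcc_of_le hb.1.le] at hy; exact lt_of_lt_of_le (by linarith) hy.1).intervalIntegrable
  have hG : HasDerivAt (fun b => ∫ y in c..b, f y) (f 1) 1 :=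
    integral_hasDerivAt_right (hfint 1 ⟨by linarith, one_lt_two⟩)
      (hf.stronglyMeasurableAtFilter isOpen_Ioi 1 hm) (hf.continuousAt (Ioi_mem_nhds hm))
  have hf1 : f 1 = (1 - x) ^ γ := by simp [f]
  rw [← hf1]
  refine ((hasDerivAt_iff_tendsto_slope.1 hG).mono_left
    (nhdsWithin_mono _ fun b hb => ne_of_lt hb)).congr' ?_
  filter_upwards [Ioo_mem_nhdsLT hc1] with b hb
  have hxb : x ≤ b := (le_max_left x 0).trans (by linarith [hb.1])
  rw [slope_def_field, integral_interval_sub_left (hfint b ⟨hb.1, by linarith [hb.2]⟩)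
    (hfint 1 ⟨by linarith, one_lt_two⟩), tailAverage, max_eq_right hxb,
    integral_symm, integral_of_le hb.2.le, neg_div, ← div_neg, neg_sub, div_eq_inv_mul]

lemma tendsto_integral_rpow_mul_tailAverage_sq (β : ℝ) {p γ : ℝ} (hp : -1 < p)
    (hγ : -1 / 2 < γ) :
    Tendsto (fun b => ∫ x in (0 : ℝ)..1, x ^ p * tailAverage β γ b x ^ 2) (𝓝[<] 1)
      (𝓝 (Real.Gamma (p + 1) * Real.Gamma (2 * γ + 1) / Real.Gamma (p + 2 * γ + 2))) := by
  have hγ1 : -1 < γ := by linarith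
  have hsq : ∀ x < (1 : ℝ), ((1 - x) ^ γ) ^ 2 = (1 - x) ^ (2 * γ) := fun x hx => by
    rw [mul_comm, Real.rpow_mul (sub_nonneg.2 hx.le), Real.rpow_two]
  set C := 2 ^ |β| * (2 / (γ + 1) + 2 ^ |γ|)
  rw [← integral_rpow_mul_one_sub_rpow hp (by linarith : -1 < 2 * γ)]
  refine tendsto_integral_filter_of_dominated_convergence
    (fun x => C ^ 2 * (x ^ p * (1 - x) ^ (2 * γ))) ?_ ?_
    ((intervalIntegrable_rpow_mul_one_sub_rpow hp (by linarith)).const_mul _) ?_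
  · refine Eventually.of_forall fun b => ?_
    exact ((by fun_prop : Measurable fun x : ℝ => x ^ p).mul
      ((stronglyMeasurable_tailAverage β γ b).measurable.pow_const 2)).aestronglyMeasurable
  · filter_upwards [Ioo_mem_nhdsLT (by norm_num : (1 / 2 : ℝ) < 1)] with b hb
    filter_upwards [volume.ae_ne 1] with x hx1 hx
    rw [uIoc_of_le zero_le_one] at hx
    have hx' : x < 1 := lt_of_le_of_ne hx.2 hx1
    have hK := tailAverage_le (β := β) hγ1 hb.1.le hb.2 hx'
    have hK0 := tailAverage_nonneg β γ (by linarith [hb.1]) hb.2.le x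
    have hxp := Real.rpow_nonneg hx.1.le p
    rw [Real.norm_of_nonneg (by positivity)]
    calc x ^ p * tailAverage β γ b x ^ 2 ≤ x ^ p * (C * (1 - x) ^ γ) ^ 2 := by gcongr
      _ = _ := by rw [mul_pow, hsq x hx']; ring
  · filter_upwards [volume.ae_ne 1] with x hx1 hx
    rw [uIoc_of_le zero_le_one] at hx
    have hx' : x < 1 := lt_of_le_of_ne hx.2 hx1
    simpa [hsq x hx'] using ((tendsto_tailAverage β γ hx').pow 2).const_mul (x ^ p)

theorem stmt_6_general (α β γ : ℝ) (hα : -(1/2 : ℝ) < α)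
    (hγ' : -(1/2 : ℝ) < γ)
    (V : ℝ → ℝ)
    (hV : ∀ t : ℝ, V t = ∫ s in (0:ℝ)..(t+1), s ^ (2*α) *
      (∫ u in (max s t)..(t+1), u ^ β * (u - s) ^ γ) ^ 2) :
    Tendsto (fun t : ℝ => V t / t ^ (2*α+2*β+2*γ+1)) atTop
      (nhds (Real.Gamma (2*α+1) * Real.Gamma (2*γ+1) / Real.Gamma (2*α+2*γ+2))) := by
  have hb := tendsto_div_add_one_atTop_nhdsLT_one
  have hJ := (tendsto_integral_rpow_mul_tailAverage_sq β (p := 2 * α) (γ := γ) (by linarith)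
    (by linarith)).comp hb
  have hpow : Tendsto (fun t : ℝ => (t / (t + 1)) ^ (2*α+2*β+2*γ+1)) atTop (𝓝 1) := by
    simpa using (tendsto_nhdsWithin_iff.1 hb).1.rpow_const (p := 2*α+2*β+2*γ+1)
      (Or.inl one_ne_zero)
  have hlim := hJ.div hpow one_ne_zero
  rw [div_one] at hlim
  refine hlim.congr' ?_
  filter_upwards [eventually_gt_atTop 0] with t ht
  rw [Pi.div_apply, Function.comp_apply, hV, integral_rpow_mul_sq_eq_rpow_mul _ _ _ ht,
    Real.div_rpow ht.le (by positivity)]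
  field_simp

/-- Lemma 3.4, case `γ > -1/2`: asymptotics of the incremental variance
`E(X_{t+1} - X_t)²` of the Gaussian Volterra process. -/
theorem stmt_6 (α β γ : ℝ) (hα : -(1/2 : ℝ) < α)
    (hαβγ : -(3/2 : ℝ) < α + β + γ) (hγ' : -(1/2 : ℝ) < γ)
    (V : ℝ → ℝ)
    (hV : ∀ t : ℝ, V t = ∫ s in (0:ℝ)..(t+1), s ^ (2*α) *
      (∫ u in (max s t)..(t+1), u ^ β * (u - s) ^ γ) ^ 2) :
    Tendsto (fun t : ℝ => V t / t ^ (2*α+2*β+2*γ+1)) atTop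
      (nhds (Real.Gamma (2*α+1) * Real.Gamma (2*γ+1) / Real.Gamma (2*α+2*γ+2))) :=
  stmt_6_general α β γ hα hγ' V hV
end
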